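/- arXiv:math/9802043 — 5 statements merged into one kernel-verified Lean document; each statement's English description precedes it below -/
import Mathlib

section
/- Let K be a field and R a (possibly non-unital) associative K-algebra. If R satisfies a nonmatrix identity — i.e., there is a nonzero element f of the free associative algebra K⟨X₁,…,Xₙ⟩ with zero constant term such that every evaluation of f at elements of R (performed inside the unitization of R) is 0, while f is not a polynomial identity of M₂(K) — then the unital hull of R (the unitization K ⊕ R) satisfies a nonmatrix identity. -/
/-- `f` is a polynomial identity of the `K`-algebra `R`. -/
def IsPolyIdOf (K : Type*) [Field K] (R : Type*) [Ring R] [Algebra K R]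
    {n : ℕ} (f : FreeAlgebra K (Fin n)) : Prop :=
  ∀ v : Fin n → R, FreeAlgebra.lift K v f = 0

/-- `R` satisfies a nonmatrix identity over `K`. -/
def SatisfiesNonmatrixIdentity (K : Type*) [Field K] (R : Type*) [Ring R] [Algebra K R] : Prop :=
  ∃ (n : ℕ) (f : FreeAlgebra K (Fin n)), f ≠ 0 ∧ IsPolyIdOf K R f ∧
    ¬ IsPolyIdOf K (Matrix (Fin 2) (Fin 2) K) f

/-!
Substitute `Xᵢ ↦ [Y, Z] Xᵢ` in `f`, with fresh variables `Y, Z`. In the unital hull `K ⊕ R` every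
commutator has zero scalar part, so it lies in `R`, and so does every `[y, z] xᵢ`: the new
polynomial is an identity of `K ⊕ R` because `f` vanishes on `R`. In `M₂(K)` the commutator
`c = [E₁₂, E₂₁] = diag(1, -1)` satisfies `c² = 1`, so evaluating at `Y = E₁₂`, `Z = E₂₁`,
`Xᵢ = c aᵢ` recovers `f(a)`, and the new polynomial is still not an identity of `M₂(K)`.
-/

open FreeAlgebra

theorem FreeAlgebra.lift_lift_apply {R : Type*} [CommSemiring R] {X Y A : Type*} [Semiring A]
    [Algebra R A] (φ : X → FreeAlgebra R Y) (v : Y → A) (f : FreeAlgebra R X) :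
    lift R v (lift R φ f) = lift R (fun i => lift R v (φ i)) f := by
  have : (lift R v).comp (lift R φ) = lift R (fun i => lift R v (φ i)) :=
    hom_ext (funext fun i => by simp)
  exact DFunLike.congr_fun this f

theorem Unitization.fst_commutator_mul {R A : Type*} [CommRing R] [NonUnitalRing A] [Module R A]
    (x y z : Unitization R A) : ((x * y - y * x) * z).fst = 0 := by
  simp only [sub_eq_add_neg, Unitization.fst_mul, Unitization.fst_add, Unitization.fst_neg,
    mul_comm y.fst, add_neg_cancel, zero_mul]

theorem Matrix.exists_commutator_mul_self_eq_one (K : Type*) [CommRing K] :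
    ∃ x y : Matrix (Fin 2) (Fin 2) K, (x * y - y * x) * (x * y - y * x) = 1 :=
  ⟨!![0, 1; 0, 0], !![0, 0; 1, 0], by
    simp only [Matrix.mul_fin_two, Matrix.one_fin_two]
    ext i j
    fin_cases i <;> fin_cases j <;> simp⟩

/-- The substitution `Xᵢ ↦ [Xₙ, Xₙ₊₁] Xᵢ` of `K⟨X₀, …, Xₙ₋₁⟩` into `K⟨X₀, …, Xₙ₊₁⟩`. -/
noncomputable def commutatorMulSubst (K : Type*) [CommRing K] (n : ℕ) :
    Fin n → FreeAlgebra K (Fin (n + 2)) := fun i =>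
  (ι K (Fin.natAdd n 0) * ι K (Fin.natAdd n 1) - ι K (Fin.natAdd n 1) * ι K (Fin.natAdd n 0)) *
    ι K (Fin.castAdd 2 i)

section

variable {K : Type*} [Field K] {n : ℕ}

theorem lift_commutatorMulSubst_apply {A : Type*} [Ring A] [Algebra K A]
    (v : Fin (n + 2) → A) (f : FreeAlgebra K (Fin n)) :
    lift K v (lift K (commutatorMulSubst K n) f) =
      lift K (fun i => (v (Fin.natAdd n 0) * v (Fin.natAdd n 1) -
        v (Fin.natAdd n 1) * v (Fin.natAdd n 0)) * v (Fin.castAdd 2 i)) f := by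
  simp [lift_lift_apply, commutatorMulSubst]

theorem isPolyIdOf_unitization_lift_commutatorMulSubst {R : Type*} [NonUnitalRing R] [Module K R]
    [SMulCommClass K R R] [IsScalarTower K R R] {f : FreeAlgebra K (Fin n)}
    (hf : ∀ v : Fin n → R, lift K (fun i => (Unitization.inr (v i) : Unitization K R)) f = 0) :
    IsPolyIdOf K (Unitization K R) (lift K (commutatorMulSubst K n) f) := by
  intro v
  set c := v (Fin.natAdd n 0) * v (Fin.natAdd n 1) - v (Fin.natAdd n 1) * v (Fin.natAdd n 0)
  have h_inr : (fun i => c * v (Fin.castAdd 2 i)) =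
      fun i => (Unitization.inr (c * v (Fin.castAdd 2 i)).snd : Unitization K R) :=
    funext fun i => Unitization.ext
      ((Unitization.fst_commutator_mul _ _ _).trans (Unitization.fst_inr K _).symm) rfl
  rw [lift_commutatorMulSubst_apply, h_inr, hf]

theorem not_isPolyIdOf_lift_commutatorMulSubst {A : Type*} [Ring A] [Algebra K A] {x y : A}
    (hxy : (x * y - y * x) * (x * y - y * x) = 1) {f : FreeAlgebra K (Fin n)}
    (hf : ¬ IsPolyIdOf K A f) :
    ¬ IsPolyIdOf K A (lift K (commutatorMulSubst K n) f) := by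
  intro hg
  obtain ⟨a, ha⟩ := not_forall.mp hf
  apply ha
  simpa [lift_commutatorMulSubst_apply, Fin.append_left, ← mul_assoc, hxy] using
    hg (Fin.append (fun i => (x * y - y * x) * a i) ![x, y])

end

/-- Proposition 3.1(i): if a (possibly non-unital) associative `K`-algebra `R` satisfies
a nonmatrix identity (a nonzero polynomial with zero constant term, not an identity of
`M₂(K)`, all of whose evaluations at elements of `R` — performed inside the unitization
`K ⊕ R` — vanish), then the unital hull `Unitization K R` satisfies a nonmatrix
identity. -/
theorem unitization_satisfies_nonmatrix (K : Type*) [Field K] (R : Type*)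
    [NonUnitalRing R] [Module K R] [SMulCommClass K R R] [IsScalarTower K R R]
    (h : ∃ (n : ℕ) (f : FreeAlgebra K (Fin n)), f ≠ 0 ∧
      FreeAlgebra.lift K (fun _ : Fin n => (0 : K)) f = 0 ∧
      (∀ v : Fin n → R,
        FreeAlgebra.lift K (fun i => (Unitization.inr (v i) : Unitization K R)) f = 0) ∧
      ¬ IsPolyIdOf K (Matrix (Fin 2) (Fin 2) K) f) :
    SatisfiesNonmatrixIdentity K (Unitization K R) := by
  obtain ⟨n, f, -, -, hR, hM⟩ := h
  obtain ⟨x, y, hxy⟩ := Matrix.exists_commutator_mul_self_eq_one K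
  have hMg := not_isPolyIdOf_lift_commutatorMulSubst hxy hM
  refine ⟨n + 2, lift K (commutatorMulSubst K n) f, ?_,
    isPolyIdOf_unitization_lift_commutatorMulSubst hR, hMg⟩
  exact fun hg => hMg fun v => by rw [hg, map_zero]
end

section
/- Let K be a field of characteristic 3 and let G be the dihedral group of order 6. Then the augmentation ideal ω(K[G]) does not satisfy the Engel condition: for every m ≥ 1 there exist x, y ∈ ω(K[G]) such that the left-normed iterated commutator [x,ₘy] is nonzero. -/
/-- The augmentation ideal `ω(K[G])`: the kernel of the `K`-algebra homomorphism
`K[G] → K` sending every element of `G` to `1`. -/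
noncomputable def augIdeal (K G : Type*) [Field K] [Group G] : Ideal (MonoidAlgebra K G) :=
  RingHom.ker (MonoidAlgebra.lift K K G 1)

/-- The left-normed iterated commutator `[x,ₘ y]` with `m` copies of `y`,
where `[a, b] = a * b - b * a`. -/
def engelComm {R : Type*} [Ring R] (x y : R) : ℕ → R
  | 0 => x
  | m + 1 => engelComm x y m * y - y * engelComm x y m

section Aux

open MonoidAlgebra DihedralGroup

variable {K : Type*} [Field K] [CharP K 3]

/-- Abbreviation for the group algebra of the dihedral group of order 6. -/
noncomputable abbrev AuxA (K : Type*) [Field K] := MonoidAlgebra K (DihedralGroup 3)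

noncomputable def auxX : AuxA K := single (r 1) 1 - 1
noncomputable def auxY : AuxA K := single (sr 0) 1 - 1
noncomputable def auxV : AuxA K := single (sr 2) 1 - single (sr 1) 1
noncomputable def auxU : AuxA K := single (r 1) 1 - single (r 2) 1

lemma aux_key (g : DihedralGroup 3) :
    (single g 1 : AuxA K) + single g 1 + single g 1 = 0 := by
  have h3 : (3:K) = 0 := by exact_mod_cast CharP.cast_eq_zero K 3
  rw [← single_add, ← single_add, single_eq_zero]
  linear_combination h3

lemma aux_s1 : (auxX * auxY - auxY * auxX : AuxA K) = auxV := by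
  have i1 : (sr (-1) : DihedralGroup 3) = sr 2 := by decide
  simp only [auxX, auxY, auxV, MonoidAlgebra.one_def, sub_mul, mul_sub,
    single_mul_single, mul_one, one_mul]
  norm_num [i1]
  abel

lemma aux_s2 : (auxV * auxY - auxY * auxV : AuxA K) = -auxU := by
  have i1 : (r (-2) : DihedralGroup 3) = r 1 := by decide
  have i2 : (r (-1) : DihedralGroup 3) = r 2 := by decide
  simp only [auxV, auxU, auxY, MonoidAlgebra.one_def, sub_mul, mul_sub,
    single_mul_single, mul_one, one_mul]
  norm_num [i1, i2]
  linear_combination (norm := abel1) aux_key (K := K) (r 1) - aux_key (K := K) (r 2)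

lemma aux_s3 : ((-auxU) * auxY - auxY * (-auxU) : AuxA K) = auxV := by
  have i1 : (sr (-1) : DihedralGroup 3) = sr 2 := by decide
  have i2 : (sr (-2) : DihedralGroup 3) = sr 1 := by decide
  simp only [auxV, auxU, auxY, MonoidAlgebra.one_def, neg_sub, sub_mul, mul_sub,
    single_mul_single, mul_one, one_mul]
  norm_num [i1, i2]
  linear_combination (norm := abel1) aux_key (K := K) (sr 1) - aux_key (K := K) (sr 2)

lemma aux_engel (m : ℕ) :
    engelComm (auxX : AuxA K) auxY (2 * m + 1) = auxV ∧
      engelComm (auxX : AuxA K) auxY (2 * m + 2) = -auxU := by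
  induction m with
  | zero =>
    constructor
    · show auxX * auxY - auxY * auxX = auxV
      exact aux_s1
    · show engelComm auxX auxY 1 * auxY - auxY * engelComm auxX auxY 1 = -auxU
      have h1 : engelComm (auxX : AuxA K) auxY 1 = auxV := aux_s1
      rw [h1]; exact aux_s2
  | succ n ih =>
    obtain ⟨ih1, ih2⟩ := ih
    have e1 : 2 * (n + 1) + 1 = (2 * n + 2) + 1 := by ring
    have h1 : engelComm (auxX : AuxA K) auxY (2 * (n + 1) + 1) = auxV := by
      rw [e1]
      show engelComm auxX auxY (2 * n + 2) * auxY - auxY * engelComm auxX auxY (2 * n + 2) = auxV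
      rw [ih2]; exact aux_s3
    refine ⟨h1, ?_⟩
    have e2 : 2 * (n + 1) + 2 = (2 * (n + 1) + 1) + 1 := by ring
    rw [e2]
    show engelComm auxX auxY (2 * (n + 1) + 1) * auxY -
        auxY * engelComm auxX auxY (2 * (n + 1) + 1) = -auxU
    rw [h1]; exact aux_s2

lemma aux_v_ne : (auxV : AuxA K) ≠ 0 := by
  intro h
  rw [auxV, sub_eq_zero] at h
  have := (MonoidAlgebra.single_left_injective (one_ne_zero (α := K))) h
  exact absurd this (by decide)

lemma aux_u_ne : (auxU : AuxA K) ≠ 0 := by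
  intro h
  rw [auxU, sub_eq_zero] at h
  have := (MonoidAlgebra.single_left_injective (one_ne_zero (α := K))) h
  exact absurd this (by decide)

lemma aux_mem (g : DihedralGroup 3) :
    (single g 1 - 1 : AuxA K) ∈ augIdeal K (DihedralGroup 3) := by
  simp [augIdeal, RingHom.mem_ker, MonoidAlgebra.lift_single]

end Aux

/-- Example 1.6: if `K` has characteristic `3` and `G` is the dihedral group of order
`6`, then `ω(K[G])` does not satisfy the Engel condition: for every `m ≥ 1` there are
`x, y ∈ ω(K[G])` with `[x,ₘ y] ≠ 0`. -/
theorem dihedral6_aug_ideal_not_engel (K : Type*) [Field K] [CharP K 3] :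
    ∀ m : ℕ, 1 ≤ m → ∃ x y : MonoidAlgebra K (DihedralGroup 3),
      x ∈ augIdeal K (DihedralGroup 3) ∧ y ∈ augIdeal K (DihedralGroup 3) ∧
      engelComm x y m ≠ 0 := by
  intro m hm
  refine ⟨auxX, auxY, aux_mem _, aux_mem _, ?_⟩
  rcases Nat.even_or_odd m with ⟨k, hk⟩ | ⟨k, hk⟩
  · have hk1 : 1 ≤ k := by omega
    have : m = 2 * (k - 1) + 2 := by omega
    rw [this, (aux_engel (k - 1)).2]
    exact neg_ne_zero.mpr aux_u_ne
  · rw [hk, (aux_engel k).1]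
    exact aux_v_ne
end

section
/- Let K be a field of characteristic p > 0, G a group, and t ≥ 0. Suppose that y^{p^t}·[x,_{p^t}y]·y^{p^t} = 0 for all x, y in the augmentation ideal ω(K[G]). Then for every h ∈ G, either h^{p^{t+1}} lies in the center Z(G) of G, or h^{2p^t} = 1. -/
open MonoidAlgebra LinearMap
open scoped Classical

lemma engelComm_eq_pow {K A : Type*} [Field K] [Ring A] [Algebra K A] (x y : A) (m : ℕ) :
    engelComm x y m = ((mulRight K y - mulLeft K y) ^ m) x := by
  induction m with
  | zero => simp [engelComm]
  | succ m ih =>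
    rw [engelComm, ih, pow_succ', Module.End.mul_apply]
    simp

lemma engelComm_char_pow {K A : Type*} [Field K] [Ring A] [Algebra K A] [Nontrivial A]
    {p : ℕ} [Fact p.Prime] [CharP K p] (x y : A) (n : ℕ) :
    engelComm x y (p ^ n) = x * y ^ p ^ n - y ^ p ^ n * x := by
  haveI : CharP (Module.End K A) p := charP_of_injective_algebraMap' K p
  rw [engelComm_eq_pow (K := K),
    sub_pow_char_pow_of_commute p n ((LinearMap.commute_mulLeft_right y y).symm)]
  simp

lemma mem_augIdeal_of_sub_one {K G : Type*} [Field K] [Group G] (g : G) :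
    MonoidAlgebra.of K G g - 1 ∈ augIdeal K G := by
  simp [augIdeal, RingHom.mem_ker]

section Aux
variable {K : Type*} [Field K] {p : ℕ} [CharP K p] {G : Type*} [Group G]

lemma sandwich_aux (hp : p.Prime) (H g : G) (hH1 : H ≠ 1) (hH2 : H * H ≠ 1)
    (key : Finsupp.single (H*g*H*H) (1:K) + Finsupp.single (H*H*g) 1
        + Finsupp.single (g*H) 1
      = Finsupp.single (H*H*g*H) (1:K) + Finsupp.single (g*H*H) 1
        + Finsupp.single (H*g) 1) :
    g * H ^ p = H ^ p * g := by
  by_cases hc : g * H = H * g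
  · exact (Commute.pow_right hc p)
  -- coefficient extraction
  have E : ∀ z : G,
      ((if H*g*H*H = z then (1:K) else 0) + (if H*H*g = z then (1:K) else 0)
        + (if g*H = z then (1:K) else 0))
      = ((if H*H*g*H = z then (1:K) else 0) + (if g*H*H = z then (1:K) else 0)
        + (if H*g = z then (1:K) else 0)) := by
    intro z
    have h := DFunLike.congr_fun key z
    simpa [Finsupp.single_apply] using h
  -- basic non-equalities
  have naa' : H*g*H*H ≠ H*H*g*H := by
    intro e; apply hc
    have e1 := mul_right_cancel e
    simp only [mul_assoc] at e1
    exact mul_left_cancel e1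
  have nab' : H*g*H*H ≠ g*H*H := by
    intro e; apply hH1
    have e1 := mul_right_cancel (mul_right_cancel e)
    have e2 : H*g = 1*g := by rw [one_mul]; exact e1
    exact mul_right_cancel e2
  have nac' : H*g*H*H ≠ H*g := by
    intro e; apply hH2
    simp only [mul_assoc] at e
    have e1 := mul_left_cancel e
    have e2 : g*(H*H) = g*1 := by rw [mul_one]; exact e1
    exact mul_left_cancel e2
  have nba' : H*H*g ≠ H*H*g*H := by
    intro e; apply hH1
    have e1 : (H*H*g)*1 = (H*H*g)*H := by rw [mul_one]; exact e
    exact (mul_left_cancel e1).symm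
  have nbc' : H*H*g ≠ H*g := by
    intro e; apply hH1
    simp only [mul_assoc] at e
    have e1 := mul_left_cancel e
    have e2 : H*g = 1*g := by rw [one_mul]; exact e1
    exact mul_right_cancel e2
  have nca' : g*H ≠ H*H*g*H := by
    intro e; apply hH2
    have e1 := mul_right_cancel e
    have e2 : 1*g = (H*H)*g := by rw [one_mul]; exact e1
    exact (mul_right_cancel e2).symm
  have ncb' : g*H ≠ g*H*H := by
    intro e; apply hH1
    have e1 : (g*H)*1 = (g*H)*H := by rw [mul_one]; exact e
    exact (mul_left_cancel e1).symm
  by_cases hb : H*H*g = g*H*H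
  · -- b = b'
    by_cases hba : H*H*g = H*g*H*H
    · by_cases hca : g*H = H*g*H*H
      · -- 3 = 0 from E a, 2 = 0 from E a'
        exfalso
        have e1 := E (H*g*H*H)
        rw [if_pos rfl, if_pos hba, if_pos hca, if_neg (Ne.symm naa'),
          if_neg (Ne.symm nab'), if_neg (Ne.symm nac')] at e1
        have nb'a' : g*H*H ≠ H*H*g*H := by
          intro e; rw [← hb] at e; exact nba' e
        have hc'a' : H*g = H*H*g*H := by
          have e0 : g = H*g*H := mul_right_cancel hca
          have : H*g = H*(H*g*H) := by rw [← e0]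
          rw [this]; simp [mul_assoc]
        have e2 := E (H*H*g*H)
        rw [if_neg naa', if_neg nba', if_neg nca', if_pos rfl, if_neg nb'a',
          if_pos hc'a'] at e2
        have : (1:K) = 0 := by linear_combination e1 + e2
        exact one_ne_zero this
      · -- 2 = 0, p = 2
        have e1 := E (H*g*H*H)
        rw [if_pos rfl, if_pos hba, if_neg hca, if_neg (Ne.symm naa'),
          if_neg (Ne.symm nab'), if_neg (Ne.symm nac')] at e1
        have h2 : (2:K) = 0 := by linear_combination e1
        have hp2 : p = 2 := by
          have := (CharP.cast_eq_zero_iff K p 2).mp (by exact_mod_cast h2)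
          exact ((Nat.prime_dvd_prime_iff_eq hp Nat.prime_two).mp this)
        subst hp2
        rw [pow_two, ← mul_assoc]
        exact hb.symm
    · by_cases hca : g*H = H*g*H*H
      · have e1 := E (H*g*H*H)
        rw [if_pos rfl, if_neg (fun e => hba e), if_pos hca, if_neg (Ne.symm naa'),
          if_neg (Ne.symm nab'), if_neg (Ne.symm nac')] at e1
        have h2 : (2:K) = 0 := by linear_combination e1
        have hp2 : p = 2 := by
          have := (CharP.cast_eq_zero_iff K p 2).mp (by exact_mod_cast h2)
          exact ((Nat.prime_dvd_prime_iff_eq hp Nat.prime_two).mp this)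
        subst hp2
        rw [pow_two, ← mul_assoc]
        exact hb.symm
      · exfalso
        have e1 := E (H*g*H*H)
        rw [if_pos rfl, if_neg (fun e => hba e), if_neg hca, if_neg (Ne.symm naa'),
          if_neg (Ne.symm nab'), if_neg (Ne.symm nac')] at e1
        exact one_ne_zero (by linear_combination e1)
  · -- b ≠ b'
    by_cases hab : H*g*H*H = H*H*g
    · by_cases hcb : g*H = H*H*g
      · -- p = 3 and H^3 = 1
        have e1 := E (H*H*g)
        rw [if_pos hab, if_pos rfl, if_pos hcb, if_neg (Ne.symm nba'),
          if_neg (fun e => hb e.symm), if_neg (Ne.symm nbc')] at e1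
        have h3 : (3:K) = 0 := by linear_combination e1
        have hp3 : p = 3 := by
          have := (CharP.cast_eq_zero_iff K p 3).mp (by exact_mod_cast h3)
          exact ((Nat.prime_dvd_prime_iff_eq hp Nat.prime_three).mp this)
        subst hp3
        -- derive H*H*H = 1
        have R1 : g*(H*H) = H*g := by
          have e := hab
          simp only [mul_assoc] at e
          exact mul_left_cancel e
        have R2 : g*H = H*(H*g) := by simpa [mul_assoc] using hcb
        have S : (g*H)*H = H*g := by rw [mul_assoc]; exact R1
        rw [R2] at S
        simp only [mul_assoc] at S
        rw [R2] at S
        have S2 : H*(H*(H*g)) = g := mul_left_cancel S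
        have h3' : H*H*H = 1 := by
          have : (H*H*H)*g = 1*g := by
            rw [one_mul, mul_assoc, mul_assoc]; exact S2
          exact mul_right_cancel this
        have hpow : H^3 = 1 := by
          rw [pow_succ, pow_two]; exact h3'
        rw [hpow, mul_one, one_mul]
      · exfalso
        have e1 := E (H*H*g)
        rw [if_pos hab, if_pos rfl, if_neg hcb, if_neg (Ne.symm nba'),
          if_neg (fun e => hb e.symm), if_neg (Ne.symm nbc')] at e1
        by_cases hac : H*g*H*H = g*H
        · exact hcb (hac.symm.trans hab)
        · have e2 := E (g*H)
          rw [if_neg hac, if_neg (fun e => hcb e.symm), if_pos rfl,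
            if_neg (Ne.symm nca'), if_neg (Ne.symm ncb'), if_neg (fun e => hc e.symm)] at e2
          exact one_ne_zero (by linear_combination e2)
    · by_cases hcb : g*H = H*H*g
      · exfalso
        by_cases hca : g*H = H*g*H*H
        · exact hab (hca.symm.trans hcb)
        · have e1 := E (H*g*H*H)
          rw [if_pos rfl, if_neg (fun e => hab e.symm), if_neg hca, if_neg (Ne.symm naa'),
            if_neg (Ne.symm nab'), if_neg (Ne.symm nac')] at e1
          exact one_ne_zero (by linear_combination e1)
      · exfalso
        have e1 := E (H*H*g)
        rw [if_neg hab, if_pos rfl, if_neg hcb, if_neg (Ne.symm nba'),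
          if_neg (fun e => hb e.symm), if_neg (Ne.symm nbc')] at e1
        exact one_ne_zero (by linear_combination e1)

end Aux

/-- Claim in the proof of Proposition 3.8: let `K` be a field of characteristic `p > 0`
and suppose `y^{p^t} [x,_{p^t} y] y^{p^t} = 0` for all `x, y ∈ ω(K[G])`.  Then for every
`h ∈ G`, either `h^{p^{t+1}}` is central in `G` or `h^{2 p^t} = 1`. -/
theorem central_or_small_order_of_sandwich_identity (K : Type*) [Field K]
    (p : ℕ) (hp : p.Prime) [CharP K p] (G : Type*) [Group G] (t : ℕ)
    (hid : ∀ x y : MonoidAlgebra K G, x ∈ augIdeal K G → y ∈ augIdeal K G →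
      y ^ p ^ t * engelComm x y (p ^ t) * y ^ p ^ t = 0) :
    ∀ h : G, h ^ p ^ (t + 1) ∈ Subgroup.center G ∨ h ^ (2 * p ^ t) = 1 := by
  haveI := Fact.mk hp
  haveI : CharP (MonoidAlgebra K G) p := charP_of_injective_algebraMap' K p
  intro h
  by_cases hord : h ^ (2 * p ^ t) = 1
  · exact Or.inr hord
  left
  set H : G := h ^ p ^ t with hHdef
  have hH2 : H * H ≠ 1 := by
    intro e; apply hord; rw [two_mul, pow_add]; exact e
  have hH1 : H ≠ 1 := fun e => hH2 (by rw [e, one_mul])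
  have hrw : h ^ p ^ (t + 1) = H ^ p := by rw [hHdef, pow_succ, pow_mul]
  rw [hrw, Subgroup.mem_center_iff]
  intro g
  have h0 := hid (of K G g - 1) (of K G h - 1)
    (mem_augIdeal_of_sub_one g) (mem_augIdeal_of_sub_one h)
  have hy_pow : (of K G h - 1) ^ p ^ t = of K G H - 1 := by
    rw [sub_pow_char_pow_of_commute p t (Commute.one_right _), one_pow, ← map_pow]
  rw [engelComm_char_pow (K := K), hy_pow] at h0
  have h1 : (of K G H - 1) * (of K G g * of K G H - of K G H * of K G g)
      * (of K G H - 1) = 0 := by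
    have e : (of K G g - 1) * (of K G H - 1) - (of K G H - 1) * (of K G g - 1)
        = of K G g * of K G H - of K G H * of K G g := by noncomm_ring
    rw [e] at h0; exact h0
  have h2 : of K G H * of K G g * of K G H * of K G H + of K G H * of K G H * of K G g
        + of K G g * of K G H
      = of K G H * of K G H * of K G g * of K G H + of K G g * of K G H * of K G H
        + of K G H * of K G g := by
    have expand : ∀ A X : MonoidAlgebra K G,
        (A - 1) * (X*A - A*X) * (A - 1)
          = (A*X*A*A + A*A*X + X*A) - (A*A*X*A + X*A*A + A*X) := by
      intros; noncomm_ring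
    rw [expand] at h1
    rwa [sub_eq_zero] at h1
  have key : Finsupp.single (H*g*H*H) (1:K) + Finsupp.single (H*H*g) 1
        + Finsupp.single (g*H) 1
      = Finsupp.single (H*H*g*H) (1:K) + Finsupp.single (g*H*H) 1
        + Finsupp.single (H*g) 1 := by
    have h3 : MonoidAlgebra.single (H*g*H*H) (1:K) + MonoidAlgebra.single (H*H*g) 1
          + MonoidAlgebra.single (g*H) 1
        = MonoidAlgebra.single (H*H*g*H) (1:K) + MonoidAlgebra.single (g*H*H) 1
          + MonoidAlgebra.single (H*g) 1 := by
      simpa only [MonoidAlgebra.of_apply, MonoidAlgebra.single_mul_single, one_mul] using h2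
    exact congrArg MonoidAlgebra.coeff h3
  exact sandwich_aux hp H g hH1 hH2 key
end

section
/- Let p be an odd prime and G a group whose commutator subgroup G' is a p-group (every element of G' has order a power of p). If σ ∈ G has order 2 and σ commutes with every element of G of p-power order, then σ lies in the center Z(G) of G. -/
/-- Step in the proof of Proposition 3.8: let `p` be an odd prime and `G` a group whose
commutator subgroup is a `p`-group.  If `σ ∈ G` has order `2` and commutes with every
element of `G` of `p`-power order, then `σ` is central. -/
theorem central_of_commutes_with_p_elements (p : ℕ) (hp : p.Prime) (hodd : p ≠ 2)
    (G : Type*) [Group G] (hG' : IsPGroup p (commutator G))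
    (σ : G) (hσ : orderOf σ = 2)
    (hcomm : ∀ g : G, (∃ k : ℕ, orderOf g = p ^ k) → Commute σ g) :
    σ ∈ Subgroup.center G := by
  rw [Subgroup.mem_center_iff]
  intro g
  have hσσ : σ * σ = 1 := by
    have := pow_orderOf_eq_one σ
    rwa [hσ, pow_two] at this
  have hσinv : σ⁻¹ = σ := by
    rw [inv_eq_iff_mul_eq_one]; exact hσσ
  set τ := g * σ * g⁻¹ with hτdef
  have hmem : σ * τ ∈ commutator G := by
    open scoped commutatorElement in
    have h1 : σ * τ = ⁅σ, g⁆ := by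
      simp [hτdef, commutatorElement_def, hσinv, mul_assoc]
    rw [h1, commutator_def]
    exact Subgroup.commutator_mem_commutator (Subgroup.mem_top _) (Subgroup.mem_top _)
  have hppow : ∃ k : ℕ, orderOf (σ * τ) = p ^ k := by
    obtain ⟨k, hk⟩ := hG' ⟨σ * τ, hmem⟩
    have hdvd : orderOf (σ * τ) ∣ p ^ k := by
      have h2 : (σ * τ) ^ (p ^ k) = 1 := by
        have := congrArg (Subgroup.subtype (commutator G)) hk
        simpa using this
      exact orderOf_dvd_of_pow_eq_one h2
    obtain ⟨m, _, hm⟩ := (Nat.dvd_prime_pow hp).mp hdvd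
    exact ⟨m, hm⟩
  have hc : Commute σ (σ * τ) := hcomm _ hppow
  have hcτ : Commute σ τ := by
    have h2 := ((Commute.refl σ).inv_right).mul_right hc
    have h3 : σ⁻¹ * (σ * τ) = τ := by group
    rwa [h3] at h2
  have hττ : τ * τ = 1 := by
    have h4 : τ * τ = g * (σ * σ) * g⁻¹ := by rw [hτdef]; group
    rw [h4, hσσ]; group
  have hsq : (σ * τ) * (σ * τ) = 1 := by
    have : σ * τ * (σ * τ) = σ * σ * (τ * τ) := by
      rw [mul_assoc σ τ, ← mul_assoc τ σ τ, ← hcτ.eq]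
      group
    rw [this, hσσ, one_mul, hττ]
  have hστ : σ * τ = 1 := by
    obtain ⟨k, hk⟩ := hppow
    have hdvd2 : orderOf (σ * τ) ∣ 2 := by
      apply orderOf_dvd_of_pow_eq_one
      rw [pow_two]; exact hsq
    rw [hk] at hdvd2
    have hk0 : p ^ k = 1 := by
      rcases (Nat.dvd_prime Nat.prime_two).mp hdvd2 with h | h
      · exact h
      · exfalso
        rcases Nat.eq_zero_or_pos k with rfl | hkpos
        · simp at h
        · have : p ∣ 2 := h ▸ dvd_pow_self p hkpos.ne'
          have := (Nat.prime_dvd_prime_iff_eq hp Nat.prime_two).mp this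
          exact hodd this
    have := orderOf_eq_one_iff.mp (hk.trans hk0)
    exact this
  have hτeq : τ = σ := by
    have : τ = σ⁻¹ := by
      rw [eq_inv_iff_mul_eq_one, ← hcτ.eq] at *
      exact hστ
    rw [this, hσinv]
  have : g * σ * g⁻¹ = σ := hτeq
  calc g * σ = (g * σ * g⁻¹) * g := by group
    _ = σ * g := by rw [this]
end

section
/- Let p be a prime and G a group whose commutator subgroup G' is a p-group (every element of G' has order a power of p). Then the set P of all elements of G of p-power order is a normal subgroup of G. -/
/-! Modulo the `p`-group `G'`, an element is a `p`-element exactly when its image in the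
abelianization is one; so `P` is the preimage of the `p`-primary component of `G / G'`, which
is a subgroup because `G / G'` is abelian, and is normal as the preimage of a subgroup of an
abelian group. -/

theorem CommGroup.mem_comap_primaryComponent_iff {G A : Type*} [Group G] [CommGroup A]
    {p : ℕ} (f : G →* A) (hf : IsPGroup p f.ker) {g : G} :
    g ∈ (primaryComponent A p).comap f ↔ ∃ k : ℕ, g ^ p ^ k = 1 := by
  refine ⟨fun hg ↦ ?_, fun ⟨k, hk⟩ ↦ ⟨k, by rw [← map_pow, hk, map_one]⟩⟩
  obtain ⟨k, hk⟩ := (primaryComponent.isPGroup.comap_of_ker_isPGroup f hf) ⟨g, hg⟩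
  exact ⟨k, congrArg Subtype.val hk⟩

/-- Step in the proof of Proposition 3.8: if the commutator subgroup of `G` is a
`p`-group, then the set `P` of all elements of `G` of `p`-power order is a normal
subgroup of `G`. -/
theorem p_elements_form_normal_subgroup (p : ℕ) (hp : p.Prime)
    (G : Type*) [Group G] (hG' : IsPGroup p (commutator G)) :
    ∃ P : Subgroup G, P.Normal ∧ ∀ g : G, g ∈ P ↔ ∃ k : ℕ, orderOf g = p ^ k := by
  have : Fact p.Prime := ⟨hp⟩
  refine ⟨(CommGroup.primaryComponent (Abelianization G) p).comap Abelianization.of,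
    inferInstance, fun g ↦ ?_⟩
  rw [CommGroup.mem_comap_primaryComponent_iff _ (by rwa [Abelianization.ker_of]),
    exists_orderOf_eq_prime_pow_iff]
end
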